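/- Distinction completeness (Lemma 5): Let S be a finite labeled transition system with spectroscopy energy game G△ and attacker winning budgets Win_a, p ∈ P and Q ⊆ P. If an HML formula φ distinguishes p from every q ∈ Q (i.e., p ⊨ φ and q ⊭ φ for all q ∈ Q), then expr(φ) ∈ Win_a([p,Q]_a). -/

import Mathlib

/-! ### Energies and energy updates -/

/-- (Finite) energies: vectors in `ℕ^N`. -/
abbrev Energy (N : ℕ) := Fin N → ℕ

/-- Extended energies: vectors in `(ℕ ∪ {∞})^N`. -/
abbrev EnergyE (N : ℕ) := Fin N → ℕ∞

/-- Embedding of energies into extended energies. -/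
def Energy.toE {N : ℕ} (e : Energy N) : EnergyE N := fun k => (e k : ℕ∞)

/-- A component of an energy update: `-1`, `0`, or `min_D`. -/
inductive UpdComp (N : ℕ) : Type where
  | dec : UpdComp N
  | zero : UpdComp N
  | minOf (D : Finset (Fin N)) : UpdComp N
deriving DecidableEq

/-- An energy update: a vector of update components, where a `min_D`
component at index `k` must satisfy `k ∈ D`. -/
structure EnergyUpdate (N : ℕ) : Type where
  comp : Fin N → UpdComp N
  valid : ∀ k D, comp k = UpdComp.minOf D → k ∈ D

open Classical in
/-- Applying an energy update to an extended energy: component `k` becomes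
`e k - 1`, `e k`, or `min_{d ∈ D} e d`; the result is undefined (`none`) if
some component would become negative. -/
noncomputable def applyUpdE {N : ℕ} (e : EnergyE N) (u : EnergyUpdate N) :
    Option (EnergyE N) :=
  if ∀ k, u.comp k = UpdComp.dec → e k ≠ 0 then
    some (fun k =>
      match u.comp k with
      | UpdComp.dec => e k - 1
      | UpdComp.zero => e k
      | UpdComp.minOf D => (insert k D).inf' (Finset.insert_nonempty k D) e)
  else none

open Classical in
/-- Applying an energy update to a (finite) energy. -/
noncomputable def applyUpdN {N : ℕ} (e : Energy N) (u : EnergyUpdate N) :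
    Option (Energy N) :=
  if ∀ k, u.comp k = UpdComp.dec → e k ≠ 0 then
    some (fun k =>
      match u.comp k with
      | UpdComp.dec => e k - 1
      | UpdComp.zero => e k
      | UpdComp.minOf D => (insert k D).inf' (Finset.insert_nonempty k D) e)
  else none

/-! ### Declining energy games -/

/-- A declining `N`-dimensional energy game: positions (partitioned into defender
positions and attacker positions), moves, and a weight function assigning an
energy update to each move. -/
structure EnergyGame (N : ℕ) where
  Pos : Type
  defender : Pos → Prop
  move : Pos → Pos → Prop
  weight : Pos → Pos → EnergyUpdate N

/-- The attacker wins from position `g` with (extended) initial energy budget `e`: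
inductive (attractor) characterization of the existence of an attacker winning
strategy.  (The attacker wins exactly the finite plays that get stuck at a defender
position without the energy having become negative, so the attacker has a winning
strategy iff they can force the play into a stuck defender position in finitely
many steps while keeping all energy levels defined.) -/
inductive AttackerWins {N : ℕ} (G : EnergyGame N) : G.Pos → EnergyE N → Prop where
  | attack {g g' : G.Pos} {e e' : EnergyE N} :
      ¬ G.defender g → G.move g g' →
      applyUpdE e (G.weight g g') = some e' →
      AttackerWins G g' e' → AttackerWins G g e
  | defend {g : G.Pos} {e : EnergyE N} :
      G.defender g →
      (∀ g', G.move g g' → (applyUpdE e (G.weight g g')).isSome) →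
      (∀ g' e', G.move g g' → applyUpdE e (G.weight g g') = some e' →
        AttackerWins G g' e') →
      AttackerWins G g e
/-! ### The spectroscopy energy game -/

/-- Lifting of transition steps to sets of processes:
`stepSet step Q a = {q' | ∃ q ∈ Q, q →a q'}`. -/
def stepSet {P : Type} {Act : Type} (step : P → Act → P → Prop) (Q : Set P) (a : Act) :
    Set P := {q' | ∃ q ∈ Q, step q a q'}

/-- The actions enabled initially for a process `p`: `I(p)`. -/
def enabledActs {P : Type} {Act : Type} (step : P → Act → P → Prop) (p : P) : Set Act :=
  {a | ∃ p', step p a p'}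

/-- Positions of the spectroscopy energy game: attacker positions `[p,Q]_a`,
attacker clause positions `[p,q]_a^∧`, and defender positions `(p,Q,Q*)_d`. -/
inductive SpecPos (P : Type) : Type where
  | att (p : P) (Q : Set P)
  | attConj (p q : P)
  | defp (p : P) (Q Qs : Set P)

/-- Update `(-1,0,0,0,0,0)` of observation moves. -/
def uObs : EnergyUpdate 6 :=
  ⟨![.dec, .zero, .zero, .zero, .zero, .zero], by decide⟩

/-- Update `(0,-1,0,0,0,0)` of conjunction challenges. -/
def uConj : EnergyUpdate 6 :=
  ⟨![.zero, .dec, .zero, .zero, .zero, .zero], by decide⟩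

/-- Update `(min_{1,3},0,0,0,0,0)` of conjunction revivals. -/
def uRevival : EnergyUpdate 6 :=
  ⟨![.minOf {0, 2}, .zero, .zero, .zero, .zero, .zero], by decide⟩

/-- Update `(0,0,0,min_{3,4},0,0)` of conjunction answers. -/
def uAnswer : EnergyUpdate 6 :=
  ⟨![.zero, .zero, .zero, .minOf {2, 3}, .zero, .zero], by decide⟩

/-- Update `(min_{1,4},0,0,0,0,0)` of positive decisions. -/
def uPos : EnergyUpdate 6 :=
  ⟨![.minOf {0, 3}, .zero, .zero, .zero, .zero, .zero], by decide⟩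

/-- Update `(min_{1,5},0,0,0,0,-1)` of negative decisions. -/
def uNeg : EnergyUpdate 6 :=
  ⟨![.minOf {0, 4}, .zero, .zero, .zero, .zero, .dec], by decide⟩

/-- The moves of the spectroscopy energy game `G△`. -/
inductive SpecMove {P : Type} {Act : Type} (step : P → Act → P → Prop) :
    SpecPos P → SpecPos P → Prop where
  | obs {p p' : P} {Q : Set P} {a : Act} :
      step p a p' →
      SpecMove step (.att p Q) (.att p' (stepSet step Q a))
  | conjChallenge {p : P} {Q Qs : Set P} :
      Qs ⊆ Q →
      SpecMove step (.att p Q) (.defp p (Q \ Qs) Qs)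
  | conjRevival {p : P} {Q Qs : Set P} :
      Qs ≠ ∅ →
      SpecMove step (.defp p Q Qs) (.att p Qs)
  | conjAnswer {p q : P} {Q Qs : Set P} :
      q ∈ Q →
      SpecMove step (.defp p Q Qs) (.attConj p q)
  | posDecision {p q : P} :
      SpecMove step (.attConj p q) (.att p {q})
  | negDecision {p q : P} :
      p ≠ q →
      SpecMove step (.attConj p q) (.att q {p})

/-- The moves of the clever spectroscopy game `G▲`: like `SpecMove`, with conjunction
challenges restricted to the four subsets
`∅`, `{q ∈ Q | I(q) ⊆ I(p)}`, `{q ∈ Q | I(p) ⊆ I(q)}`, `{q ∈ Q | I(p) = I(q)}`. -/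
inductive CleverMove {P : Type} {Act : Type} (step : P → Act → P → Prop) :
    SpecPos P → SpecPos P → Prop where
  | obs {p p' : P} {Q : Set P} {a : Act} :
      step p a p' →
      CleverMove step (.att p Q) (.att p' (stepSet step Q a))
  | conjChallenge {p : P} {Q Qs : Set P} :
      (Qs = ∅ ∨
       Qs = {q ∈ Q | enabledActs step q ⊆ enabledActs step p} ∨
       Qs = {q ∈ Q | enabledActs step p ⊆ enabledActs step q} ∨
       Qs = {q ∈ Q | enabledActs step p = enabledActs step q}) →
      CleverMove step (.att p Q) (.defp p (Q \ Qs) Qs)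
  | conjRevival {p : P} {Q Qs : Set P} :
      Qs ≠ ∅ →
      CleverMove step (.defp p Q Qs) (.att p Qs)
  | conjAnswer {p q : P} {Q Qs : Set P} :
      q ∈ Q →
      CleverMove step (.defp p Q Qs) (.attConj p q)
  | posDecision {p q : P} :
      CleverMove step (.attConj p q) (.att p {q})
  | negDecision {p q : P} :
      p ≠ q →
      CleverMove step (.attConj p q) (.att q {p})

open Classical in
/-- The weight function of the spectroscopy energy game (well-defined on all moves). -/
noncomputable def specWeight {P : Type} : SpecPos P → SpecPos P → EnergyUpdate 6
  | .att _ _, .att _ _ => uObs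
  | .att _ _, .defp _ _ _ => uConj
  | .defp _ _ _, .att _ _ => uRevival
  | .defp _ _ _, .attConj _ _ => uAnswer
  | .attConj p _, .att p' _ => if p = p' then uPos else uNeg
  | _, _ => uObs

/-- The spectroscopy energy game `G△` of a labeled transition system. -/
noncomputable def specGame {P : Type} {Act : Type} (step : P → Act → P → Prop) :
    EnergyGame 6 where
  Pos := SpecPos P
  defender g := ∃ p Q Qs, g = SpecPos.defp p Q Qs
  move := SpecMove step
  weight := specWeight

/-- The clever spectroscopy energy game `G▲` of a labeled transition system. -/
noncomputable def cleverGame {P : Type} {Act : Type} (step : P → Act → P → Prop) :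
    EnergyGame 6 where
  Pos := SpecPos P
  defender g := ∃ p Q Qs, g = SpecPos.defp p Q Qs
  move := CleverMove step
  weight := specWeight
/-! ### Hennessy–Milner logic -/

/-- Hennessy–Milner logic over actions `Act`: observations `⟨a⟩φ` and finite
conjunctions `⋀ {ψ_i}` whose clauses are positive (`poss`) or negated (`negs`)
formulas. -/
inductive HML (Act : Type) : Type where
  | obs (a : Act) (φ : HML Act)
  | conj (poss : List (HML Act)) (negs : List (HML Act))

/-- HML semantics: `HML.sat step φ p` means `p ⊨ φ`. -/
def HML.sat {P : Type} {Act : Type} (step : P → Act → P → Prop) :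
    HML Act → P → Prop
  | .obs a φ, p => ∃ p', step p a p' ∧ HML.sat step φ p'
  | .conj poss negs, p =>
      (∀ φ ∈ poss, HML.sat step φ p) ∧ (∀ φ ∈ negs, ¬ HML.sat step φ p)

/-- `φ` distinguishes `p` from `q`: `p ⊨ φ` and `q ⊭ φ`. -/
def distinguishes {P : Type} {Act : Type} (step : P → Act → P → Prop)
    (φ : HML Act) (p q : P) : Prop :=
  φ.sat step p ∧ ¬ φ.sat step q

/-- Maximum (supremum) of a list of naturals, `0` for the empty list. -/
def listMax (l : List ℕ) : ℕ := l.foldr max 0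

/-- Supremum of a list of naturals after removing one maximal element
(the "other positive clauses" in the pricing). -/
def supErase (l : List ℕ) : ℕ := listMax (l.erase (listMax l))

mutual
/-- The expressiveness price `expr : HML → ℕ^6` of a formula.
Components (0-indexed): 0 — modal depth; 1 — nesting depth of conjunctions;
2 — modal depth of the deepest positive clauses; 3 — modal depth of the other
positive clauses; 4 — modal depth of negative clauses; 5 — nesting depth of
negations. -/
def HML.expr {Act : Type} : HML Act → Energy 6
  | .obs _ φ => fun k => HML.expr φ k + (if k = 0 then 1 else 0)
  | .conj poss negs =>
      let pe := exprList poss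
      let ne := exprList negs
      -- prices of the clauses (a negated clause adds 1 to component 5)
      let clauseE : List (Energy 6) :=
        pe ++ ne.map (fun v => fun k => v k + (if k = 5 then 1 else 0))
      let base : Energy 6 := fun k =>
        if k = 1 then 1 + listMax (clauseE.map (fun v => v 1))
        else if k = 2 then listMax (pe.map (fun v => v 0))
        else if k = 3 then supErase (pe.map (fun v => v 0))
        else if k = 4 then listMax (ne.map (fun v => v 0))
        else 0
      fun k => max (base k) (listMax (clauseE.map (fun v => v k)))

/-- Prices of a list of formulas. -/
def exprList {Act : Type} : List (HML Act) → List (Energy 6)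
  | [] => []
  | φ :: l => HML.expr φ :: exprList l
end

/-- The expressiveness price as an extended energy. -/
def HML.exprE {Act : Type} (φ : HML Act) : EnergyE 6 := (HML.expr φ).toE

/-! ### Auxiliary lemmas -/

lemma listMax_cons (a : ℕ) (t : List ℕ) : listMax (a :: t) = max a (listMax t) := rfl

lemma le_listMax {l : List ℕ} {x : ℕ} (h : x ∈ l) : x ≤ listMax l := by
  induction l with
  | nil => cases h
  | cons a t ih =>
    rcases List.mem_cons.1 h with rfl | h
    · simp [listMax_cons]
    · simp only [listMax_cons]
      exact le_trans (ih h) (le_max_right _ _)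

lemma listMax_le {l : List ℕ} {n : ℕ} (h : ∀ x ∈ l, x ≤ n) : listMax l ≤ n := by
  induction l with
  | nil => simp [listMax]
  | cons a t ih =>
    simp only [listMax_cons]
    exact max_le (h a (by simp)) (ih fun x hx => h x (by simp [hx]))

lemma listMax_mem {l : List ℕ} (h : l ≠ []) : listMax l ∈ l := by
  induction l with
  | nil => simp at h
  | cons a t ih =>
    rcases eq_or_ne t [] with rfl | ht
    · simp [listMax]
    · rcases le_total a (listMax t) with h' | h'
      · simp only [listMax_cons, max_eq_right h']
        exact List.mem_cons_of_mem _ (ih ht)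
      · simp [listMax_cons, max_eq_left h']

lemma listMax_perm {l l' : List ℕ} (h : l.Perm l') : listMax l = listMax l' := by
  induction h with
  | nil => rfl
  | cons x _ ih => simp [listMax_cons, ih]
  | swap x y l => simp only [listMax_cons]; omega
  | trans _ _ ih1 ih2 => omega

lemma supErase_le_listMax (l : List ℕ) : supErase l ≤ listMax l := by
  apply listMax_le
  intro x hx
  exact le_listMax (List.mem_of_mem_erase hx)

lemma le_supErase {α : Type*} [DecidableEq α] (f : α → ℕ) {l : List α} {r x : α}
    (hr : r ∈ l) (hx : x ∈ l) (hne : x ≠ r)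
    (hmax : f r = listMax (l.map f)) : f x ≤ supErase (l.map f) := by
  have hperm : l.Perm (r :: l.erase r) := List.perm_cons_erase hr
  have hmap : (l.map f).Perm (f r :: (l.erase r).map f) := by simpa using hperm.map f
  have hx' : x ∈ l.erase r := (List.mem_erase_of_ne hne).2 hx
  have h1 : ((l.map f).erase (listMax (l.map f))).Perm ((l.erase r).map f) := by
    rw [← hmax]
    simpa [List.erase_cons_head] using hmap.erase (f r)
  unfold supErase
  rw [listMax_perm h1]
  exact le_listMax (List.mem_map_of_mem (f := f) hx')

lemma exprList_eq_map {Act : Type} (l : List (HML Act)) : exprList l = l.map HML.expr := by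
  induction l with
  | nil => rfl
  | cons a t ih => simp [exprList, ih]
section ExprLemmas
variable {Act : Type}

lemma expr_conj_eq (poss negs : List (HML Act)) :
    HML.expr (HML.conj poss negs) = fun k =>
      max ((if k = 1 then 1 + listMax ((poss.map HML.expr ++ (negs.map HML.expr).map
              (fun v : Energy 6 => fun k => v k + (if k = 5 then 1 else 0))).map (fun v : Energy 6 => v 1))
       else if k = 2 then listMax ((poss.map HML.expr).map (fun v : Energy 6 => v 0))
       else if k = 3 then supErase ((poss.map HML.expr).map (fun v : Energy 6 => v 0))
       else if k = 4 then listMax ((negs.map HML.expr).map (fun v : Energy 6 => v 0))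
       else 0))
      (listMax ((poss.map HML.expr ++ (negs.map HML.expr).map
         (fun v : Energy 6 => fun k => v k + (if k = 5 then 1 else 0))).map (fun v : Energy 6 => v k))) := by
  simp only [HML.expr, exprList_eq_map]

lemma expr_conj_0 (poss negs : List (HML Act)) :
    HML.expr (HML.conj poss negs) 0 =
      listMax (poss.map (fun ψ => HML.expr ψ 0) ++ negs.map (fun ψ => HML.expr ψ 0)) := by
  simp [expr_conj_eq, Function.comp_def]

lemma expr_conj_1 (poss negs : List (HML Act)) :
    HML.expr (HML.conj poss negs) 1 =
      1 + listMax (poss.map (fun ψ => HML.expr ψ 1) ++ negs.map (fun ψ => HML.expr ψ 1)) := by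
  simp [expr_conj_eq, Function.comp_def]

lemma expr_conj_2 (poss negs : List (HML Act)) :
    HML.expr (HML.conj poss negs) 2 =
      max (listMax (poss.map (fun ψ => HML.expr ψ 0)))
        (listMax (poss.map (fun ψ => HML.expr ψ 2) ++ negs.map (fun ψ => HML.expr ψ 2))) := by
  simp [expr_conj_eq, Function.comp_def]

lemma expr_conj_3 (poss negs : List (HML Act)) :
    HML.expr (HML.conj poss negs) 3 =
      max (supErase (poss.map (fun ψ => HML.expr ψ 0)))
        (listMax (poss.map (fun ψ => HML.expr ψ 3) ++ negs.map (fun ψ => HML.expr ψ 3))) := by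
  simp [expr_conj_eq, Function.comp_def]

lemma expr_conj_4 (poss negs : List (HML Act)) :
    HML.expr (HML.conj poss negs) 4 =
      max (listMax (negs.map (fun ψ => HML.expr ψ 0)))
        (listMax (poss.map (fun ψ => HML.expr ψ 4) ++ negs.map (fun ψ => HML.expr ψ 4))) := by
  simp [expr_conj_eq, Function.comp_def]

lemma expr_conj_5 (poss negs : List (HML Act)) :
    HML.expr (HML.conj poss negs) 5 =
      listMax (poss.map (fun ψ => HML.expr ψ 5) ++ negs.map (fun ψ => HML.expr ψ 5 + 1)) := by
  simp [expr_conj_eq, Function.comp_def]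

lemma expr_obs_eq (a : Act) (ψ : HML Act) :
    HML.expr (HML.obs a ψ) = fun k => HML.expr ψ k + (if k = 0 then 1 else 0) := by
  simp [HML.expr]

end ExprLemmas
section ExprLemmas2
variable {Act : Type}

lemma fin6 : ∀ k : Fin 6, k = 0 ∨ k = 1 ∨ k = 2 ∨ k = 3 ∨ k = 4 ∨ k = 5 := by decide

lemma expr_pos_le {poss negs : List (HML Act)} {ψ : HML Act} (h : ψ ∈ poss) (k : Fin 6) :
    HML.expr ψ k ≤ HML.expr (HML.conj poss negs) k := by
  rcases fin6 k with rfl | rfl | rfl | rfl | rfl | rfl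
  · rw [expr_conj_0]
    exact le_listMax (List.mem_append_left _
      (List.mem_map_of_mem (f := fun ψ => HML.expr ψ 0) h))
  · rw [expr_conj_1]
    have h1 : HML.expr ψ 1 ≤ listMax (poss.map (fun ψ => HML.expr ψ 1)
        ++ negs.map (fun ψ => HML.expr ψ 1)) :=
      le_listMax (List.mem_append_left _ (List.mem_map_of_mem (f := fun ψ => HML.expr ψ 1) h))
    omega
  · rw [expr_conj_2]
    exact le_trans (le_listMax (List.mem_append_left _
      (List.mem_map_of_mem (f := fun ψ => HML.expr ψ 2) h))) (le_max_right _ _)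
  · rw [expr_conj_3]
    exact le_trans (le_listMax (List.mem_append_left _
      (List.mem_map_of_mem (f := fun ψ => HML.expr ψ 3) h))) (le_max_right _ _)
  · rw [expr_conj_4]
    exact le_trans (le_listMax (List.mem_append_left _
      (List.mem_map_of_mem (f := fun ψ => HML.expr ψ 4) h))) (le_max_right _ _)
  · rw [expr_conj_5]
    exact le_listMax (List.mem_append_left _
      (List.mem_map_of_mem (f := fun ψ => HML.expr ψ 5) h))

lemma expr_neg_le {poss negs : List (HML Act)} {ψ : HML Act} (h : ψ ∈ negs) (k : Fin 6) :
    HML.expr ψ k ≤ HML.expr (HML.conj poss negs) k := by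
  rcases fin6 k with rfl | rfl | rfl | rfl | rfl | rfl
  · rw [expr_conj_0]
    exact le_listMax (List.mem_append_right _
      (List.mem_map_of_mem (f := fun ψ => HML.expr ψ 0) h))
  · rw [expr_conj_1]
    have h1 : HML.expr ψ 1 ≤ listMax (poss.map (fun ψ => HML.expr ψ 1)
        ++ negs.map (fun ψ => HML.expr ψ 1)) :=
      le_listMax (List.mem_append_right _ (List.mem_map_of_mem (f := fun ψ => HML.expr ψ 1) h))
    omega
  · rw [expr_conj_2]
    exact le_trans (le_listMax (List.mem_append_right _
      (List.mem_map_of_mem (f := fun ψ => HML.expr ψ 2) h))) (le_max_right _ _)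
  · rw [expr_conj_3]
    exact le_trans (le_listMax (List.mem_append_right _
      (List.mem_map_of_mem (f := fun ψ => HML.expr ψ 3) h))) (le_max_right _ _)
  · rw [expr_conj_4]
    exact le_trans (le_listMax (List.mem_append_right _
      (List.mem_map_of_mem (f := fun ψ => HML.expr ψ 4) h))) (le_max_right _ _)
  · rw [expr_conj_5]
    have h1 : HML.expr ψ 5 + 1 ≤ listMax (poss.map (fun ψ => HML.expr ψ 5)
        ++ negs.map (fun ψ => HML.expr ψ 5 + 1)) :=
      le_listMax (List.mem_append_right _ (List.mem_map_of_mem (f := fun ψ => HML.expr ψ 5 + 1) h))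
    omega

lemma expr_neg_le_5 {poss negs : List (HML Act)} {ψ : HML Act} (h : ψ ∈ negs) :
    HML.expr ψ 5 + 1 ≤ HML.expr (HML.conj poss negs) 5 := by
  rw [expr_conj_5]
  exact le_listMax (List.mem_append_right _
    (List.mem_map_of_mem (f := fun ψ => HML.expr ψ 5 + 1) h))

lemma expr_pos_conj_1 {poss negs : List (HML Act)} {ψ : HML Act} (h : ψ ∈ poss) :
    HML.expr ψ 1 + 1 ≤ HML.expr (HML.conj poss negs) 1 := by
  rw [expr_conj_1]
  have h1 : HML.expr ψ 1 ≤ listMax (poss.map (fun ψ => HML.expr ψ 1)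
      ++ negs.map (fun ψ => HML.expr ψ 1)) :=
    le_listMax (List.mem_append_left _ (List.mem_map_of_mem (f := fun ψ => HML.expr ψ 1) h))
  omega

lemma expr_neg_conj_1 {poss negs : List (HML Act)} {ψ : HML Act} (h : ψ ∈ negs) :
    HML.expr ψ 1 + 1 ≤ HML.expr (HML.conj poss negs) 1 := by
  rw [expr_conj_1]
  have h1 : HML.expr ψ 1 ≤ listMax (poss.map (fun ψ => HML.expr ψ 1)
      ++ negs.map (fun ψ => HML.expr ψ 1)) :=
    le_listMax (List.mem_append_right _ (List.mem_map_of_mem (f := fun ψ => HML.expr ψ 1) h))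
  omega

lemma one_le_expr_conj_1 (poss negs : List (HML Act)) :
    1 ≤ HML.expr (HML.conj poss negs) 1 := by
  rw [expr_conj_1]; omega

lemma expr_pos_le_2 {poss negs : List (HML Act)} {ψ : HML Act} (h : ψ ∈ poss) :
    HML.expr ψ 0 ≤ HML.expr (HML.conj poss negs) 2 := by
  rw [expr_conj_2]
  exact le_trans (le_listMax (List.mem_map_of_mem (f := fun ψ => HML.expr ψ 0) h))
    (le_max_left _ _)

lemma expr_neg_le_4 {poss negs : List (HML Act)} {ψ : HML Act} (h : ψ ∈ negs) :
    HML.expr ψ 0 ≤ HML.expr (HML.conj poss negs) 4 := by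
  rw [expr_conj_4]
  exact le_trans (le_listMax (List.mem_map_of_mem (f := fun ψ => HML.expr ψ 0) h))
    (le_max_left _ _)

lemma expr_other_le_3 {poss negs : List (HML Act)} {r ψ : HML Act}
    (hr : r ∈ poss) (h : ψ ∈ poss) (hne : ψ ≠ r)
    (hmax : HML.expr r 0 = listMax (poss.map (fun ψ => HML.expr ψ 0))) :
    HML.expr ψ 0 ≤ HML.expr (HML.conj poss negs) 3 := by
  classical
  rw [expr_conj_3]
  exact le_trans (le_supErase (fun ψ => HML.expr ψ 0) hr h hne hmax) (le_max_left _ _)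

lemma exists_max_pos {poss : List (HML Act)} (h : poss ≠ []) :
    ∃ r ∈ poss, HML.expr r 0 = listMax (poss.map (fun ψ => HML.expr ψ 0)) := by
  have hne : poss.map (fun ψ => HML.expr ψ 0) ≠ [] := by simp [h]
  have hmem := listMax_mem hne
  obtain ⟨r, hr, hr'⟩ := List.mem_map.1 hmem
  exact ⟨r, hr, hr'⟩

lemma expr_three_le_two : ∀ (φ : HML Act), HML.expr φ 3 ≤ HML.expr φ 2
  | .obs a ψ => by
      have := expr_three_le_two ψ
      simp only [expr_obs_eq]
      simpa using this
  | .conj poss negs => by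
      rw [expr_conj_2, expr_conj_3]
      apply max_le
      · exact le_trans (supErase_le_listMax _) (le_max_left _ _)
      · refine le_trans (listMax_le ?_) (le_max_right _ _)
        intro x hx
        rcases List.mem_append.1 hx with hx | hx
        · obtain ⟨ψ, hψ, rfl⟩ := List.mem_map.1 hx
          exact le_trans (expr_three_le_two ψ)
            (le_listMax (List.mem_append_left _
              (List.mem_map_of_mem (f := fun ψ => HML.expr ψ 2) hψ)))
        · obtain ⟨ψ, hψ, rfl⟩ := List.mem_map.1 hx
          exact le_trans (expr_three_le_two ψ)
            (le_listMax (List.mem_append_right _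
              (List.mem_map_of_mem (f := fun ψ => HML.expr ψ 2) hψ)))
  termination_by φ => sizeOf φ
  decreasing_by
    all_goals first
      | (have hlt := List.sizeOf_lt_of_mem hψ; simp at *; omega)
      | (simp; omega)
      | simp

end ExprLemmas2
section UpdLemmas

lemma cv0 {α : Type*} (a0 a1 a2 a3 a4 a5 : α) : ![a0,a1,a2,a3,a4,a5] (0 : Fin 6) = a0 := rfl
lemma cv1 {α : Type*} (a0 a1 a2 a3 a4 a5 : α) : ![a0,a1,a2,a3,a4,a5] (1 : Fin 6) = a1 := rfl
lemma cv2 {α : Type*} (a0 a1 a2 a3 a4 a5 : α) : ![a0,a1,a2,a3,a4,a5] (2 : Fin 6) = a2 := rfl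
lemma cv3 {α : Type*} (a0 a1 a2 a3 a4 a5 : α) : ![a0,a1,a2,a3,a4,a5] (3 : Fin 6) = a3 := rfl
lemma cv4 {α : Type*} (a0 a1 a2 a3 a4 a5 : α) : ![a0,a1,a2,a3,a4,a5] (4 : Fin 6) = a4 := rfl
lemma cv5 {α : Type*} (a0 a1 a2 a3 a4 a5 : α) : ![a0,a1,a2,a3,a4,a5] (5 : Fin 6) = a5 := rfl

lemma inf'_pair (e : Fin 6 → ℕ∞) (a b : Fin 6) (h : ({a,b} : Finset (Fin 6)).Nonempty) :
    Finset.inf' {a,b} h e = e a ⊓ e b := by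
  apply le_antisymm
  · exact le_inf (Finset.inf'_le _ (by simp)) (Finset.inf'_le _ (by simp))
  · refine Finset.le_inf' _ _ fun i hi => ?_
    rcases Finset.mem_insert.1 hi with rfl | hi
    · exact inf_le_left
    · rw [Finset.mem_singleton.1 hi]; exact inf_le_right

lemma inf'_answer (e : Fin 6 → ℕ∞) (h : (insert (3:Fin 6) ({2,3} : Finset (Fin 6))).Nonempty) :
    Finset.inf' (insert (3:Fin 6) ({2,3} : Finset (Fin 6))) h e = e 2 ⊓ e 3 := by
  apply le_antisymm
  · exact le_inf (Finset.inf'_le _ (by decide)) (Finset.inf'_le _ (by decide))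
  · refine Finset.le_inf' _ _ fun i hi => ?_
    have h23 : ∀ j : Fin 6, j ∈ (insert (3:Fin 6) ({2,3} : Finset (Fin 6))) →
        j = 2 ∨ j = 3 := by decide
    rcases h23 i hi with rfl | rfl
    · exact inf_le_left
    · exact inf_le_right

lemma upd_uObs (e : EnergyE 6) (h : e 0 ≠ 0) :
    applyUpdE e uObs = some (fun k => if k = 0 then e 0 - 1 else e k) := by
  unfold applyUpdE
  rw [if_pos]
  · congr 1
    funext k
    rcases fin6 k with rfl | rfl | rfl | rfl | rfl | rfl <;>
      simp [uObs, cv0, cv1, cv2, cv3, cv4, cv5]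
  · intro k hk
    rcases fin6 k with rfl | rfl | rfl | rfl | rfl | rfl <;>
      simp_all [uObs, cv0, cv1, cv2, cv3, cv4, cv5]

lemma upd_uConj (e : EnergyE 6) (h : e 1 ≠ 0) :
    applyUpdE e uConj = some (fun k => if k = 1 then e 1 - 1 else e k) := by
  unfold applyUpdE
  rw [if_pos]
  · congr 1
    funext k
    rcases fin6 k with rfl | rfl | rfl | rfl | rfl | rfl <;>
      simp [uConj, cv0, cv1, cv2, cv3, cv4, cv5]
  · intro k hk
    rcases fin6 k with rfl | rfl | rfl | rfl | rfl | rfl <;>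
      simp_all [uConj, cv0, cv1, cv2, cv3, cv4, cv5]

lemma upd_uRevival (e : EnergyE 6) :
    applyUpdE e uRevival = some (fun k => if k = 0 then e 0 ⊓ e 2 else e k) := by
  unfold applyUpdE
  rw [if_pos]
  · congr 1
    funext k
    rcases fin6 k with rfl | rfl | rfl | rfl | rfl | rfl <;>
      simp [uRevival, cv0, cv1, cv2, cv3, cv4, cv5, inf'_pair, inf'_answer]
  · intro k hk
    rcases fin6 k with rfl | rfl | rfl | rfl | rfl | rfl <;>
      simp_all [uRevival, cv0, cv1, cv2, cv3, cv4, cv5]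

lemma upd_uAnswer (e : EnergyE 6) :
    applyUpdE e uAnswer = some (fun k => if k = 3 then e 2 ⊓ e 3 else e k) := by
  unfold applyUpdE
  rw [if_pos]
  · congr 1
    funext k
    rcases fin6 k with rfl | rfl | rfl | rfl | rfl | rfl <;>
      simp [uAnswer, cv0, cv1, cv2, cv3, cv4, cv5, inf'_pair, inf'_answer]
  · intro k hk
    rcases fin6 k with rfl | rfl | rfl | rfl | rfl | rfl <;>
      simp_all [uAnswer, cv0, cv1, cv2, cv3, cv4, cv5]

lemma upd_uPos (e : EnergyE 6) :
    applyUpdE e uPos = some (fun k => if k = 0 then e 0 ⊓ e 3 else e k) := by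
  unfold applyUpdE
  rw [if_pos]
  · congr 1
    funext k
    rcases fin6 k with rfl | rfl | rfl | rfl | rfl | rfl <;>
      simp [uPos, cv0, cv1, cv2, cv3, cv4, cv5, inf'_pair, inf'_answer]
  · intro k hk
    rcases fin6 k with rfl | rfl | rfl | rfl | rfl | rfl <;>
      simp_all [uPos, cv0, cv1, cv2, cv3, cv4, cv5]

lemma upd_uNeg (e : EnergyE 6) (h : e 5 ≠ 0) :
    applyUpdE e uNeg = some (fun k => if k = 0 then e 0 ⊓ e 4
      else if k = 5 then e 5 - 1 else e k) := by
  unfold applyUpdE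
  rw [if_pos]
  · congr 1
    funext k
    rcases fin6 k with rfl | rfl | rfl | rfl | rfl | rfl <;>
      simp [uNeg, cv0, cv1, cv2, cv3, cv4, cv5, inf'_pair, inf'_answer]
  · intro k hk
    rcases fin6 k with rfl | rfl | rfl | rfl | rfl | rfl <;>
      simp_all [uNeg, cv0, cv1, cv2, cv3, cv4, cv5]

end UpdLemmas
section GameLemmas
variable {P Act : Type} (step : P → Act → P → Prop)

lemma att_step_obs {p p' : P} {Q : Set P} {a : Act} (h : step p a p')
    (e : EnergyE 6) (h0 : e 0 ≠ 0)
    (hwin : AttackerWins (specGame step) (.att p' (stepSet step Q a))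
      (fun k => if k = 0 then e 0 - 1 else e k)) :
    AttackerWins (specGame step) (.att p Q) e := by
  refine AttackerWins.attack ?_ (SpecMove.obs h) ?_ hwin
  · rintro ⟨p', Q', Qs', h⟩
    cases h
  · exact upd_uObs e h0

lemma att_step_conj {p : P} {Q Qs : Set P} (hsub : Qs ⊆ Q)
    (e : EnergyE 6) (h1 : e 1 ≠ 0)
    (hwin : AttackerWins (specGame step) (.defp p (Q \ Qs) Qs)
      (fun k => if k = 1 then e 1 - 1 else e k)) :
    AttackerWins (specGame step) (.att p Q) e := by
  refine AttackerWins.attack ?_ (SpecMove.conjChallenge hsub) ?_ hwin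
  · rintro ⟨p', Q', Qs', h⟩
    cases h
  · exact upd_uConj e h1

lemma attConj_pos {p q : P} (e : EnergyE 6)
    (hwin : AttackerWins (specGame step) (.att p {q})
      (fun k => if k = 0 then e 0 ⊓ e 3 else e k)) :
    AttackerWins (specGame step) (.attConj p q) e := by
  refine AttackerWins.attack ?_ (SpecMove.posDecision) ?_ hwin
  · rintro ⟨p', Q', Qs', h⟩
    cases h
  · show applyUpdE e (specWeight _ _) = _
    have hw : specWeight (SpecPos.attConj p q) (SpecPos.att p ({q} : Set P)) = uPos := by
      simp [specWeight]
    rw [hw]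
    exact upd_uPos e

lemma attConj_neg {p q : P} (hpq : p ≠ q) (e : EnergyE 6) (h5 : e 5 ≠ 0)
    (hwin : AttackerWins (specGame step) (.att q {p})
      (fun k => if k = 0 then e 0 ⊓ e 4 else if k = 5 then e 5 - 1 else e k)) :
    AttackerWins (specGame step) (.attConj p q) e := by
  refine AttackerWins.attack ?_ (SpecMove.negDecision hpq) ?_ hwin
  · rintro ⟨p', Q', Qs', h⟩
    cases h
  · show applyUpdE e (specWeight _ _) = _
    have hw : specWeight (SpecPos.attConj p q) (SpecPos.att q ({p} : Set P)) = uNeg := by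
      simp [specWeight, hpq]
    rw [hw]
    exact upd_uNeg e h5

lemma defp_win (p : P) (A Qs : Set P) (e : EnergyE 6)
    (hrev : Qs ≠ ∅ → AttackerWins (specGame step) (.att p Qs)
      (fun k => if k = 0 then e 0 ⊓ e 2 else e k))
    (hans : ∀ q ∈ A, AttackerWins (specGame step) (.attConj p q)
      (fun k => if k = 3 then e 2 ⊓ e 3 else e k)) :
    AttackerWins (specGame step) (.defp p A Qs) e := by
  refine AttackerWins.defend ⟨p, A, Qs, rfl⟩ ?_ ?_
  · intro g' hmove
    have hm : SpecMove step (SpecPos.defp p A Qs) g' := hmove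
    cases hm with
    | conjRevival h =>
        rw [show (specGame step).weight (SpecPos.defp p A Qs) (SpecPos.att p Qs)
            = uRevival from rfl, upd_uRevival]
        rfl
    | @conjAnswer _ q _ _ h =>
        rw [show (specGame step).weight (SpecPos.defp p A Qs) (SpecPos.attConj p q)
            = uAnswer from rfl, upd_uAnswer]
        rfl
  · intro g' e'' hmove hupd
    have hm : SpecMove step (SpecPos.defp p A Qs) g' := hmove
    cases hm with
    | conjRevival h =>
        replace hupd : applyUpdE e uRevival = some e'' := hupd
        rw [upd_uRevival] at hupd
        cases hupd
        exact hrev h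
    | @conjAnswer _ q _ _ h =>
        replace hupd : applyUpdE e uAnswer = some e'' := hupd
        rw [upd_uAnswer] at hupd
        cases hupd
        exact hans q h

end GameLemmas
section Main

lemma enat_le_sub_one {n : ℕ} {c : ℕ∞} (h : (n : ℕ∞) + 1 ≤ c) : (n : ℕ∞) ≤ c - 1 :=
  (ENat.addLECancellable_of_ne_top (by simp)).le_tsub_of_add_le_right h

variable {P Act : Type}

lemma conjCase (step : P → Act → P → Prop) (poss negs : List (HML Act))
    (IHpos : ∀ ψ ∈ poss, ∀ (p : P) (Q : Set P) (e : EnergyE 6),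
      ψ.sat step p → (∀ q ∈ Q, ¬ ψ.sat step q) → ψ.exprE ≤ e →
      AttackerWins (specGame step) (.att p Q) e)
    (IHneg : ∀ ψ ∈ negs, ∀ (p : P) (Q : Set P) (e : EnergyE 6),
      ψ.sat step p → (∀ q ∈ Q, ¬ ψ.sat step q) → ψ.exprE ≤ e →
      AttackerWins (specGame step) (.att p Q) e)
    (p : P) (Q : Set P) (e : EnergyE 6)
    (hp : (HML.conj poss negs).sat step p)
    (hQ : ∀ q ∈ Q, ¬ (HML.conj poss negs).sat step q)
    (hle : (HML.conj poss negs).exprE ≤ e) :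
    AttackerWins (specGame step) (.att p Q) e := by
  simp only [HML.sat] at hp hQ
  obtain ⟨hppos, hpneg⟩ := hp
  have hek : ∀ k, ((HML.expr (HML.conj poss negs) k : ℕ∞)) ≤ e k := fun k => hle k
  have hfail : ∀ q ∈ Q, (∃ ψ ∈ poss, ¬ ψ.sat step q) ∨ (∃ ψ ∈ negs, ψ.sat step q) := by
    intro q hq
    have hq' := hQ q hq
    by_contra hcon
    push_neg at hcon
    exact hq' ⟨hcon.1, hcon.2⟩
  have h1 : e 1 ≠ 0 := by
    have h1' : (1 : ℕ∞) ≤ e 1 :=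
      le_trans (Nat.one_le_cast.mpr (one_le_expr_conj_1 poss negs)) (hek 1)
    exact fun h0 => by simp [h0] at h1'
  -- generic facts used in both branches
  have hnegclause : ∀ q, q ∈ Q → ∀ ψ ∈ negs, ψ.sat step q →
      AttackerWins (specGame step) (.attConj p q)
        (fun k => if k = 3 then (fun k => if k = 1 then e 1 - 1 else e k) 2
            ⊓ (fun k => if k = 1 then e 1 - 1 else e k) 3
          else (fun k => if k = 1 then e 1 - 1 else e k) k) := by
    intro q hqQ ψ hψ hsat
    have hpq : p ≠ q := fun h => (hpneg ψ hψ) (h ▸ hsat)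
    have h5 : (fun k => if k = 3 then (fun k => if k = 1 then e 1 - 1 else e k) 2
          ⊓ (fun k => if k = 1 then e 1 - 1 else e k) 3
        else (fun k => if k = 1 then e 1 - 1 else e k) k) 5 ≠ 0 := by
      have h5' : (1 : ℕ∞) ≤ e 5 := by
        refine le_trans ?_ (hek 5)
        exact_mod_cast le_trans (by omega) (expr_neg_le_5 (poss := poss) hψ)
      show e 5 ≠ 0
      exact fun h0 => by simp [h0] at h5'
    refine attConj_neg step hpq _ h5 ?_
    refine IHneg ψ hψ q {p} _ hsat ?_ ?_
    · intro q' hq'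
      have : q' = p := hq'
      rw [this]
      exact hpneg ψ hψ
    · intro k
      have hc : ∀ j : Fin 6, (HML.expr ψ j : ℕ∞) ≤ e j :=
        fun j => le_trans (Nat.cast_le.mpr (expr_neg_le hψ j)) (hek j)
      rcases fin6 k with rfl | rfl | rfl | rfl | rfl | rfl
      · exact le_inf (hc 0)
          (le_trans (Nat.cast_le.mpr (expr_neg_le_4 (poss := poss) hψ)) (hek 4))
      · have := le_trans (Nat.cast_le.mpr (expr_neg_conj_1 (poss := poss) hψ)) (hek 1)
        push_cast at this
        exact enat_le_sub_one this
      · exact hc 2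
      · refine le_inf ?_ (hc 3)
        exact le_trans (Nat.cast_le.mpr (le_trans (expr_three_le_two ψ) (expr_neg_le hψ 2)))
          (hek 2)
      · exact hc 4
      · have := le_trans (Nat.cast_le.mpr (expr_neg_le_5 (poss := poss) hψ)) (hek 5)
        push_cast at this
        exact enat_le_sub_one this
  rcases eq_or_ne poss [] with hposs | hposs
  · -- no positive clauses
    subst hposs
    refine att_step_conj step (Set.empty_subset Q) e h1 ?_
    refine defp_win step p (Q \ ∅) ∅ _ (fun hne => absurd rfl hne) ?_
    intro q hq
    have hqQ : q ∈ Q := hq.1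
    rcases hfail q hqQ with ⟨ψ, hψ, _⟩ | ⟨ψ, hψ, hsat⟩
    · exact absurd hψ List.not_mem_nil
    · exact hnegclause q hqQ ψ hψ hsat
  · -- pick a maximal positive clause r
    obtain ⟨r, hr, hrmax⟩ := exists_max_pos hposs
    have hrsat := hppos r hr
    refine att_step_conj step (Q := Q) (Qs := {q | q ∈ Q ∧ ¬ r.sat step q})
      (fun q hq => hq.1) e h1 ?_
    refine defp_win step p _ _ _ ?_ ?_
    · -- revival
      intro _
      refine IHpos r hr p _ _ hrsat (fun q hq => hq.2) ?_
      intro k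
      have hc : ∀ j : Fin 6, (HML.expr r j : ℕ∞) ≤ e j :=
        fun j => le_trans (Nat.cast_le.mpr (expr_pos_le hr j)) (hek j)
      rcases fin6 k with rfl | rfl | rfl | rfl | rfl | rfl
      · refine le_inf (hc 0) ?_
        exact le_trans (Nat.cast_le.mpr (expr_pos_le_2 (negs := negs) hr)) (hek 2)
      · have := le_trans (Nat.cast_le.mpr (expr_pos_conj_1 (negs := negs) hr)) (hek 1)
        push_cast at this
        exact enat_le_sub_one this
      · exact hc 2
      · exact hc 3
      · exact hc 4
      · exact hc 5
    · -- answers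
      intro q hq
      have hqQ : q ∈ Q := hq.1
      have hqr : r.sat step q := by
        by_contra hc
        exact hq.2 ⟨hqQ, hc⟩
      rcases hfail q hqQ with ⟨ψ, hψ, hsat⟩ | ⟨ψ, hψ, hsat⟩
      · -- positive clause distinguishing p from q, ψ ≠ r
        have hne : ψ ≠ r := fun h => hsat (h ▸ hqr)
        refine attConj_pos step _ ?_
        refine IHpos ψ hψ p {q} _ (hppos ψ hψ) ?_ ?_
        · intro q' hq'
          have : q' = q := hq'
          rw [this]
          exact hsat
        · intro k
          have hc : ∀ j : Fin 6, (HML.expr ψ j : ℕ∞) ≤ e j :=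
            fun j => le_trans (Nat.cast_le.mpr (expr_pos_le hψ j)) (hek j)
          rcases fin6 k with rfl | rfl | rfl | rfl | rfl | rfl
          · refine le_inf (hc 0) (le_inf ?_ ?_)
            · exact le_trans (Nat.cast_le.mpr (expr_pos_le_2 (negs := negs) hψ)) (hek 2)
            · exact le_trans (Nat.cast_le.mpr
                (expr_other_le_3 (negs := negs) hr hψ hne hrmax)) (hek 3)
          · have := le_trans (Nat.cast_le.mpr (expr_pos_conj_1 (negs := negs) hψ)) (hek 1)
            push_cast at this
            exact enat_le_sub_one this
          · exact hc 2
          · refine le_inf ?_ (hc 3)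
            exact le_trans (Nat.cast_le.mpr (le_trans (expr_three_le_two ψ)
              (expr_pos_le hψ 2))) (hek 2)
          · exact hc 4
          · exact hc 5
      · exact hnegclause q hqQ ψ hψ hsat

theorem key_win (step : P → Act → P → Prop) :
    ∀ (φ : HML Act) (p : P) (Q : Set P) (e : EnergyE 6),
      φ.sat step p → (∀ q ∈ Q, ¬ φ.sat step q) → φ.exprE ≤ e →
      AttackerWins (specGame step) (SpecPos.att p Q) e
  | HML.obs a ψ, p, Q, e, hp, hQ, hle => by
      simp only [HML.sat] at hp hQ
      obtain ⟨p', hstep, hp'⟩ := hp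
      have hek : ∀ k, ((HML.expr (HML.obs a ψ) k : ℕ∞)) ≤ e k := fun k => hle k
      have h00 : (HML.expr ψ 0 + 1 : ℕ∞) ≤ e 0 := by
        have h := hek 0
        have he : HML.expr (HML.obs a ψ) 0 = HML.expr ψ 0 + 1 := by simp [expr_obs_eq]
        rw [he] at h
        exact_mod_cast h
      have h0 : e 0 ≠ 0 := by
        intro hz
        rw [hz] at h00
        simp at h00
      refine att_step_obs step hstep e h0 ?_
      refine key_win step ψ p' (stepSet step Q a) _ hp' ?_ ?_
      · rintro q' ⟨q, hq, hstepq⟩ hsat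
        exact hQ q hq ⟨q', hstepq, hsat⟩
      · intro k
        have hik : ∀ j : Fin 6, (HML.expr ψ j : ℕ∞) ≤ e j := by
          intro j
          refine le_trans ?_ (hek j)
          rw [expr_obs_eq]
          exact_mod_cast Nat.le_add_right _ _
        rcases fin6 k with rfl | rfl | rfl | rfl | rfl | rfl
        · exact enat_le_sub_one h00
        · exact hik 1
        · exact hik 2
        · exact hik 3
        · exact hik 4
        · exact hik 5
  | HML.conj poss negs, p, Q, e, hp, hQ, hle =>
      conjCase step poss negs
        (fun ψ h => key_win step ψ) (fun ψ h => key_win step ψ) p Q e hp hQ hle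
  termination_by φ => sizeOf φ
  decreasing_by
    all_goals simp only [HML.obs.sizeOf_spec, HML.conj.sizeOf_spec]
    all_goals try have hlt := List.sizeOf_lt_of_mem h
    all_goals omega

end Main
/-- **Distinction completeness** (Lemma 5): for a finite LTS, if `φ` distinguishes
`p` from every `q ∈ Q`, then `expr φ ∈ Win_a([p,Q]_a)`. -/
theorem distinction_completeness {P Act : Type} [Fintype P] [Fintype Act]
    (step : P → Act → P → Prop) (p : P) (Q : Set P) (φ : HML Act)
    (hp : φ.sat step p) (hQ : ∀ q ∈ Q, ¬ φ.sat step q) :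
    AttackerWins (specGame step) (SpecPos.att p Q) φ.exprE :=
  key_win step φ p Q φ.exprE hp hQ (le_refl _)
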